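/- Let φ(z) = (az+b)/(cz+d) (a,b,c,d ∈ ℂ, ad−bc ≠ 0) be a linear fractional self-map of 𝔻, let σ(z) = (conj(a)·z − conj(c))/(−conj(b)·z + conj(d)), let β ∈ ℂ \ {0}, let ψ(z) = β·K_{σ(0)}(z), and let μ ∈ ℂ with |μ| = 1. Then the weighted composition operator W_{ψ,φ} on H² is J_μ-normal if and only if |b| = |c| and (conj(c)·d − conj(a)·b)·conj(μ) = conj(a)·c − conj(b)·d. -/
import Mathlib


open scoped ComplexConjugate InnerProductSpace ENNReal NNReal
open Complex Metric

noncomputable section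

abbrev H2 : Type := lp (fun _ : ℕ => ℂ) 2

namespace H2

/-- Evaluation of an element of `H²` (given by its sequence of Taylor coefficients)
at a point `z` of the unit disk: `f(z) = ∑ aₙ zⁿ`. -/
def eval (f : H2) (z : ℂ) : ℂ := ∑' n : ℕ, (f : ∀ _ : ℕ, ℂ) n * z ^ n

/-- The Szegő kernel function `K_w(z) = 1/(1 - conj w * z)`. -/
def ker (w z : ℂ) : ℂ := (1 - conj w * z)⁻¹

lemma kernel_memℓp (w : ℂ) (hw : ‖w‖ < 1) :
    Memℓp (fun n : ℕ => (conj w) ^ n) 2 := by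
  apply memℓp_gen
  have hsum : Summable (fun n : ℕ => (‖w‖ ^ 2) ^ n) :=
    summable_geometric_of_lt_one (by positivity) (by nlinarith [norm_nonneg w])
  refine hsum.congr fun n => ?_
  have h2 : ((2 : ℝ≥0∞).toReal) = ((2 : ℕ) : ℝ) := by simp
  rw [h2, Real.rpow_natCast]
  simp [norm_pow, ← pow_mul, Nat.mul_comm]

/-- The reproducing kernel of `H²` at `w` in the unit disk, as an element of `H²`. -/
def kernel (w : ℂ) : H2 :=
  if hw : ‖w‖ < 1 then ⟨fun n : ℕ => (conj w) ^ n, kernel_memℓp w hw⟩ else 0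

/-- `T` is the composition operator `C_φ` on `H²`. -/
def IsCompOp (φ : ℂ → ℂ) (T : H2 →L[ℂ] H2) : Prop :=
  ∀ f : H2, ∀ z : ℂ, ‖z‖ < 1 → eval (T f) z = eval f (φ z)

/-- `W` is the weighted composition operator `W_{ψ,φ}` on `H²`. -/
def IsWCompOp (ψ φ : ℂ → ℂ) (W : H2 →L[ℂ] H2) : Prop :=
  ∀ f : H2, ∀ z : ℂ, ‖z‖ < 1 → eval (W f) z = ψ z * eval f (φ z)

/-- A conjugation on `H²`: a conjugate-linear involution satisfying `⟪Cx, Cy⟫ = ⟪y, x⟫`. -/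
structure IsConjugation (C : H2 → H2) : Prop where
  map_add : ∀ x y : H2, C (x + y) = C x + C y
  map_smul : ∀ (c : ℂ) (x : H2), C (c • x) = conj c • C x
  invol : ∀ x : H2, C (C x) = x
  inner_conj : ∀ x y : H2, ⟪C x, C y⟫_ℂ = ⟪y, x⟫_ℂ

/-- `T` is `C`-normal: `C T* T C = T T*`. -/
def CNormal (C : H2 → H2) (T : H2 →L[ℂ] H2) : Prop :=
  ∀ x : H2, C ((ContinuousLinearMap.adjoint T) (T (C x)))
      = T ((ContinuousLinearMap.adjoint T) x)

/-- `T` is a normal operator: `T* T = T T*`. -/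
def IsNormalOp (T : H2 →L[ℂ] H2) : Prop :=
  (ContinuousLinearMap.adjoint T).comp T = T.comp (ContinuousLinearMap.adjoint T)

/-- `T` is a unitary operator. -/
def IsUnitaryOp (T : H2 →L[ℂ] H2) : Prop :=
  T.comp (ContinuousLinearMap.adjoint T) = ContinuousLinearMap.id ℂ H2 ∧
  (ContinuousLinearMap.adjoint T).comp T = ContinuousLinearMap.id ℂ H2

/-- `C` is the conjugation `J_μ` on `H²`: `(J_μ f)(z) = conj (f (μ * conj z))`. -/
def IsJmu (μ : ℂ) (C : H2 → H2) : Prop :=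
  ∀ f : H2, ∀ z : ℂ, ‖z‖ < 1 → eval (C f) z = conj (eval f (μ * conj z))

/-- `ξ_p(z) = √(1-|p|²) / (1 - conj p * z)`. -/
def xi (p z : ℂ) : ℂ := (Real.sqrt (1 - ‖p‖ ^ 2) : ℂ) / (1 - conj p * z)

/-- `τ_p(z) = λ (p - z) / (1 - conj p * z)`. -/
def tau (p lam z : ℂ) : ℂ := lam * (p - z) / (1 - conj p * z)

/-- `C` is the conjugation `J W_{ξ_p, τ_p}` on `H²`:
`(C f)(z) = conj (ξ_p(conj z) * f (τ_p (conj z)))`. -/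
def IsJW (p lam : ℂ) (C : H2 → H2) : Prop :=
  ∀ f : H2, ∀ z : ℂ, ‖z‖ < 1 →
    eval (C f) z = conj (xi p (conj z) * eval f (tau p lam (conj z)))

end H2
lemma aux_hasFPowerSeriesAt (c : ℕ → ℂ) (M ρ : ℝ) (hρ : 0 ≤ ρ)
    (hb : ∀ n, ‖c n‖ ≤ M * ρ ^ n) :
    HasFPowerSeriesAt (fun z : ℂ => ∑' n, c n * z ^ n)
      (FormalMultilinearSeries.ofScalars ℂ c) 0 := by
  set p := FormalMultilinearSeries.ofScalars ℂ c with hp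
  have hM : 0 ≤ M := le_trans (norm_nonneg (c 0)) (by simpa using hb 0)
  set r : ℝ≥0 := ⟨(ρ + 1)⁻¹, by positivity⟩ with hr
  have hrpos : (0:ℝ≥0∞) < r := by
    simp only [ENNReal.coe_pos, ← NNReal.coe_pos]
    show (0:ℝ) < (ρ+1)⁻¹
    positivity
  have hrad : (r : ℝ≥0∞) ≤ p.radius := by
    apply FormalMultilinearSeries.le_radius_of_bound _ M
    intro n
    have h1 : ‖p n‖ = ‖c n‖ := FormalMultilinearSeries.ofScalars_norm ℂ c n
    have h2 : (r:ℝ)^n = (ρ + 1)⁻¹ ^ n := rfl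
    have h3 : ρ * (ρ+1)⁻¹ ≤ 1 := by
      rw [mul_inv_le_iff₀ (by positivity)]; linarith
    calc ‖p n‖ * (r:ℝ) ^ n = (‖c n‖) * (ρ+1)⁻¹ ^ n := by rw [h1, h2]
      _ ≤ (M * ρ ^ n) * (ρ+1)⁻¹ ^ n :=
          mul_le_mul_of_nonneg_right (hb n) (by positivity)
      _ = M * (ρ * (ρ+1)⁻¹) ^ n := by ring
      _ ≤ M * 1 ^ n := by
          exact mul_le_mul_of_nonneg_left (pow_le_pow_left₀ (by positivity) h3 n) hM
      _ = M := by simp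
  have hball := p.hasFPowerSeriesOnBall (lt_of_lt_of_le hrpos hrad)
  have hsum : p.sum = fun z : ℂ => ∑' n, c n * z ^ n := by
    funext x
    unfold FormalMultilinearSeries.sum
    exact tsum_congr fun n => by
      rw [FormalMultilinearSeries.ofScalars_apply_eq, smul_eq_mul]
  rw [hsum] at hball
  exact hball.hasFPowerSeriesAt

namespace H2

lemma coeFn_kernel (w : ℂ) (hw : ‖w‖ < 1) (n : ℕ) :
    (kernel w : ∀ _ : ℕ, ℂ) n = (conj w) ^ n := by
  rw [kernel, dif_pos hw]

lemma hasFPowerSeriesAt_eval (f : H2) :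
    HasFPowerSeriesAt (eval f) (FormalMultilinearSeries.ofScalars ℂ (f : ∀ _ : ℕ, ℂ)) 0 :=
  aux_hasFPowerSeriesAt _ ‖f‖ 1 one_pos.le
    (fun n => by simpa using lp.norm_apply_le_norm two_ne_zero f n)

lemma ext_eval (f g : H2) (h : ∀ z : ℂ, ‖z‖ < 1 → eval f z = eval g z) : f = g := by
  have heq : ∀ᶠ z in nhds (0:ℂ), eval f z = eval g z := by
    filter_upwards [Metric.ball_mem_nhds (0:ℂ) one_pos] with z hz
    exact h z (by simpa [Metric.mem_ball, dist_zero_right] using hz)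
  have h12 := (hasFPowerSeriesAt_eval f).eq_formalMultilinearSeries_of_eventually
    (hasFPowerSeriesAt_eval g) heq
  exact lp.ext (FormalMultilinearSeries.ofScalars_series_injective ℂ ℂ h12)

lemma eq_geom (f : H2) (A q : ℂ)
    (h : ∀ z : ℂ, ‖z‖ < 1 → eval f z = A * (1 - q * z)⁻¹) :
    ∀ n, (f : ∀ _ : ℕ, ℂ) n = A * q ^ n := by
  have h2 : HasFPowerSeriesAt (fun z : ℂ => ∑' n, (A * q ^ n) * z ^ n)
      (FormalMultilinearSeries.ofScalars ℂ (fun n => A * q ^ n)) 0 :=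
    aux_hasFPowerSeriesAt _ ‖A‖ ‖q‖ (norm_nonneg q)
      (fun n => by rw [norm_mul, norm_pow])
  have hε : (0:ℝ) < min 1 (‖q‖ + 1)⁻¹ := lt_min one_pos (by positivity)
  have heq : ∀ᶠ z in nhds (0:ℂ), eval f z = ∑' n, (A * q ^ n) * z ^ n := by
    filter_upwards [Metric.ball_mem_nhds (0:ℂ) hε] with z hz
    rw [Metric.mem_ball, dist_zero_right] at hz
    have hz1 : ‖z‖ < 1 := lt_of_lt_of_le hz (min_le_left _ _)
    have hqz : ‖q * z‖ < 1 := by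
      rw [norm_mul]
      calc ‖q‖ * ‖z‖ ≤ ‖q‖ * (‖q‖+1)⁻¹ :=
            mul_le_mul_of_nonneg_left ((hz.trans_le (min_le_right _ _)).le) (norm_nonneg q)
        _ < 1 := by
            rw [mul_inv_lt_iff₀ (by positivity)]; linarith
    rw [h z hz1]
    rw [tsum_congr (fun n => by rw [mul_assoc, ← mul_pow]), tsum_mul_left,
      tsum_geometric_of_norm_lt_one hqz]
  have h12 := (hasFPowerSeriesAt_eval f).eq_formalMultilinearSeries_of_eventually h2 heq
  exact fun n => congrFun (FormalMultilinearSeries.ofScalars_series_injective ℂ ℂ h12) n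

lemma norm_lt_one_of_geom (f : H2) (A q : ℂ) (hA : A ≠ 0)
    (hf : ∀ n, (f : ∀ _ : ℕ, ℂ) n = A * q ^ n) : ‖q‖ < 1 := by
  by_contra hq
  push_neg at hq
  have hs : Summable (fun n : ℕ => ‖(f : ∀ _ : ℕ, ℂ) n‖ ^ (2:ℝ≥0∞).toReal) :=
    f.property.summable (by norm_num)
  have h0 := hs.tendsto_atTop_zero
  have hA2 : (0:ℝ) < ‖A‖ ^ (2:ℝ≥0∞).toReal := by
    exact Real.rpow_pos_of_pos (norm_pos_iff.mpr hA) _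
  obtain ⟨n, hn⟩ := (h0.eventually_lt_const hA2).exists
  apply absurd hn
  push_neg
  rw [hf n, norm_mul, norm_pow]
  calc ‖A‖ ^ (2:ℝ≥0∞).toReal ≤ (‖A‖ * 1) ^ (2:ℝ≥0∞).toReal := by rw [mul_one]
    _ ≤ (‖A‖ * ‖q‖ ^ n) ^ (2:ℝ≥0∞).toReal := by
        apply Real.rpow_le_rpow (by positivity)
        · exact mul_le_mul_of_nonneg_left (one_le_pow₀ hq) (norm_nonneg A)
        · norm_num

lemma eval_kernel (w z : ℂ) (hw : ‖w‖ < 1) (hz : ‖z‖ < 1) :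
    eval (kernel w) z = (1 - conj w * z)⁻¹ := by
  unfold eval
  have h : ‖conj w * z‖ < 1 := by
    rw [norm_mul, RCLike.norm_conj]
    nlinarith [norm_nonneg w, norm_nonneg z]
  rw [tsum_congr (fun n => by rw [coeFn_kernel w hw, ← mul_pow]),
    tsum_geometric_of_norm_lt_one h]

lemma inner_kernel (w : ℂ) (hw : ‖w‖ < 1) (f : H2) :
    ⟪kernel w, f⟫_ℂ = eval f w := by
  rw [lp.inner_eq_tsum]
  unfold eval
  refine tsum_congr fun n => ?_
  rw [RCLike.inner_apply, coeFn_kernel w hw, map_pow, Complex.conj_conj, mul_comm]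

lemma inner_kernel_kernel (w v : ℂ) (hw : ‖w‖ < 1) (hv : ‖v‖ < 1) :
    ⟪kernel w, kernel v⟫_ℂ = (1 - conj v * w)⁻¹ := by
  rw [inner_kernel w hw, eval_kernel v w hv hw]

lemma eval_zero (z : ℂ) : eval (0 : H2) z = 0 := by
  unfold eval
  rw [tsum_congr (fun n => by rw [lp.coeFn_zero, Pi.zero_apply, zero_mul]), tsum_zero]

end H2

end

noncomputable section
open H2

set_option maxHeartbeats 1000000 in
/-- Theorem 3.1: `W_{ψ,φ}` with `ψ = β K_{σ(0)}` is `J_μ`-normal iff `|b| = |c|` and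
`(conj c * d - conj a * b) * conj μ = conj a * c - conj b * d`. -/
theorem stmt6 (a b c d β μ : ℂ) (hβ : β ≠ 0) (hμ : ‖μ‖ = 1)
    (φ : ℂ → ℂ) (hφ : ∀ z : ℂ, φ z = (a * z + b) / (c * z + d))
    (hdet : a * d - b * c ≠ 0)
    (hden : ∀ z : ℂ, ‖z‖ < 1 → c * z + d ≠ 0)
    (hself : ∀ z : ℂ, ‖z‖ < 1 → ‖φ z‖ < 1)
    (σ : ℂ → ℂ) (hσ : ∀ z : ℂ, σ z = (conj a * z - conj c) / (-(conj b) * z + conj d))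
    (ψ : ℂ → ℂ) (hψ : ∀ z : ℂ, ψ z = β * H2.ker (σ 0) z)
    (W : H2 →L[ℂ] H2) (hW : H2.IsWCompOp ψ φ W)
    (C : H2 → H2) (hC : H2.IsConjugation C) (hCμ : H2.IsJmu μ C) :
    H2.CNormal C W ↔
      (‖b‖ = ‖c‖ ∧ (conj c * d - conj a * b) * conj μ = conj a * c - conj b * d) := by
  have hd0 : d ≠ 0 := by have := hden 0 (by norm_num); simpa using this
  have hbd : ‖b‖ < ‖d‖ := by
    have h0 := hself 0 (by norm_num)
    rw [hφ 0] at h0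
    simp only [mul_zero, zero_add] at h0
    rw [norm_div, div_lt_one (norm_pos_iff.mpr hd0)] at h0
    exact h0
  have hμμ : μ * conj μ = 1 := by
    rw [Complex.mul_conj']
    norm_cast
    rw [hμ]; norm_num
  have hns : ∀ x y : ℂ, ‖x‖ < 1 → ‖y‖ < 1 → 1 - x * y ≠ 0 := by
    intro x y hx hy h
    rw [sub_eq_zero] at h
    have h1 : ‖x * y‖ = 1 := by rw [← h, norm_one]
    rw [norm_mul] at h1
    nlinarith [norm_nonneg x, norm_nonneg y]
  have hdb : ∀ u : ℂ, ‖u‖ < 1 → d - conj u * b ≠ 0 := by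
    intro u hu h
    rw [sub_eq_zero] at h
    have h1 : ‖d‖ = ‖u‖ * ‖b‖ := by rw [h, norm_mul, RCLike.norm_conj]
    nlinarith [norm_nonneg u, norm_nonneg b]
  have hψ' : ∀ z : ℂ, ψ z = β * d * (c * z + d)⁻¹ := by
    intro z
    rw [hψ, H2.ker, hσ]
    have h1 : (1 : ℂ) - conj ((conj a * 0 - conj c) / (-(conj b) * 0 + conj d)) * z
        = (c * z + d) / d := by
      simp only [mul_zero, zero_sub, zero_add, map_div₀, map_neg, Complex.conj_conj]
      field_simp
      ring
    rw [h1, inv_div]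
    ring
  -- weighted composition on kernels
  set q : ℂ → ℂ := fun u => (conj u * a - c) * (d - conj u * b)⁻¹ with hqdef
  set A : ℂ → ℂ := fun u => β * d * (d - conj u * b)⁻¹ with hAdef
  have hAne : ∀ u : ℂ, ‖u‖ < 1 → A u ≠ 0 := fun u hu =>
    mul_ne_zero (mul_ne_zero hβ hd0) (inv_ne_zero (hdb u hu))
  have hWk : ∀ u : ℂ, ‖u‖ < 1 →
      ∀ n, (W (kernel u) : ∀ _ : ℕ, ℂ) n = A u * (q u) ^ n := by
    intro u hu
    apply H2.eq_geom
    intro z hz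
    rw [hW (kernel u) z hz, hψ' z, H2.eval_kernel u (φ z) hu (hself z hz), hφ z]
    have h1 : c * z + d ≠ 0 := hden z hz
    have h2 : d - conj u * b ≠ 0 := hdb u hu
    have h3 : 1 - conj u * ((a * z + b) / (c * z + d)) ≠ 0 := by
      have h := hns (conj u) (φ z) (by rwa [RCLike.norm_conj]) (hself z hz)
      rwa [hφ z] at h
    have h4 : 1 - q u * z ≠ 0 := by
      have h5 : (1 - q u * z) * (d - conj u * b)
          = (c * z + d) * (1 - conj u * ((a * z + b) / (c * z + d))) := by
        rw [hqdef]
        field_simp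
        ring
      intro h0
      rw [h0, zero_mul] at h5
      exact (mul_ne_zero h1 h3) h5.symm
    rw [hAdef, hqdef]
    rw [hqdef] at h4
    field_simp
    ring
  have hq1 : ∀ u : ℂ, ‖u‖ < 1 → ‖q u‖ < 1 := fun u hu =>
    H2.norm_lt_one_of_geom (W (kernel u)) (A u) (q u) (hAne u hu) (hWk u hu)
  have hWk' : ∀ u : ℂ, ‖u‖ < 1 → W (kernel u) = A u • kernel (conj (q u)) := by
    intro u hu
    apply lp.ext
    funext n
    rw [lp.coeFn_smul, Pi.smul_apply, hWk u hu n,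
      H2.coeFn_kernel _ (by rw [RCLike.norm_conj]; exact hq1 u hu), Complex.conj_conj,
      smul_eq_mul]
  have hWinner : ∀ u u' : ℂ, ‖u‖ < 1 → ‖u'‖ < 1 →
      ⟪W (kernel u), W (kernel u')⟫_ℂ
        = conj (A u) * A u' * (1 - q u' * conj (q u))⁻¹ := by
    intro u u' hu hu'
    rw [hWk' u hu, hWk' u' hu', inner_smul_left, inner_smul_right,
      H2.inner_kernel_kernel _ _ (by rw [RCLike.norm_conj]; exact hq1 u hu)
        (by rw [RCLike.norm_conj]; exact hq1 u' hu'), Complex.conj_conj]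
    ring
  have hCk : ∀ w : ℂ, ‖w‖ < 1 → C (kernel w) = kernel (μ * conj w) := by
    intro w hw
    have hμw : ‖μ * conj w‖ < 1 := by
      rw [norm_mul, hμ, RCLike.norm_conj, one_mul]; exact hw
    apply H2.ext_eval
    intro z hz
    have hμz : ‖μ * conj z‖ < 1 := by
      rw [norm_mul, hμ, RCLike.norm_conj, one_mul]; exact hz
    rw [hCμ (kernel w) z hz, H2.eval_kernel w (μ * conj z) hw hμz,
      H2.eval_kernel (μ * conj w) z hμw hz, map_inv₀]
    congr 1
    simp only [map_sub, map_mul, map_one, Complex.conj_conj]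
    ring
  have hnorm_mu : ∀ x : ℂ, ‖x‖ < 1 → ‖μ * conj x‖ < 1 := by
    intro x hx
    rw [norm_mul, hμ, RCLike.norm_conj, one_mul]; exact hx
  have hevL : ∀ w v : ℂ, ‖w‖ < 1 → ‖v‖ < 1 →
      eval (C ((ContinuousLinearMap.adjoint W) (W (C (kernel w))))) v
        = ⟪W (kernel (μ * conj w)), W (kernel (μ * conj v))⟫_ℂ := by
    intro w v hw hv
    rw [hCμ _ v hv, ← H2.inner_kernel _ (hnorm_mu v hv),
      ContinuousLinearMap.adjoint_inner_right, hCk w hw, inner_conj_symm]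
  have hevR : ∀ w v : ℂ, ‖w‖ < 1 → ‖v‖ < 1 →
      eval (W ((ContinuousLinearMap.adjoint W) (kernel w))) v
        = ψ v * (conj (ψ w) * (1 - φ v * conj (φ w))⁻¹) := by
    intro w v hw hv
    rw [hW _ v hv, ← H2.inner_kernel (φ v) (hself v hv),
      ContinuousLinearMap.adjoint_inner_right,
      ← inner_conj_symm _ (kernel w), H2.inner_kernel w hw, hW _ w hw,
      H2.eval_kernel (φ v) (φ w) (hself v hv) (hself w hw)]
    rw [map_mul, map_inv₀, map_sub, map_one, map_mul, Complex.conj_conj]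
  have key : H2.CNormal C W ↔ ∀ w v : ℂ, ‖w‖ < 1 → ‖v‖ < 1 →
      ⟪W (kernel (μ * conj w)), W (kernel (μ * conj v))⟫_ℂ
        = ψ v * (conj (ψ w) * (1 - φ v * conj (φ w))⁻¹) := by
    constructor
    · intro h w v hw hv
      have h1 := congrArg (fun x => eval x v) (h (kernel w))
      rw [hevL w v hw hv, hevR w v hw hv] at h1
      exact h1
    · intro hP
      have hker : ∀ w : ℂ, ‖w‖ < 1 →
          C ((ContinuousLinearMap.adjoint W) (W (C (kernel w))))
            = W ((ContinuousLinearMap.adjoint W) (kernel w)) := by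
        intro w hw
        apply H2.ext_eval
        intro v hv
        rw [hevL w v hw hv, hevR w v hw hv]
        exact hP w v hw hv
      have hC0 : C 0 = 0 := by
        have h1 := hC.map_smul 0 0
        simpa using h1
      have hCsub : ∀ x y : H2, C (x - y) = C x - C y := by
        intro x y
        have h1 : C (x + (-1 : ℂ) • y) = C x + conj (-1 : ℂ) • C y := by
          rw [hC.map_add, hC.map_smul]
        simpa [sub_eq_add_neg] using h1
      have hCnorm : ∀ x : H2, ‖C x‖ = ‖x‖ := by
        intro x
        have h1 : ⟪C x, C x⟫_ℂ = ⟪x, x⟫_ℂ := hC.inner_conj x x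
        rw [inner_self_eq_norm_sq_to_K (𝕜 := ℂ), inner_self_eq_norm_sq_to_K (𝕜 := ℂ)] at h1
        have h2 : (‖C x‖ : ℝ) ^ 2 = (‖x‖ : ℝ) ^ 2 := by
          exact_mod_cast h1
        calc ‖C x‖ = Real.sqrt (‖C x‖ ^ 2) := (Real.sqrt_sq (norm_nonneg _)).symm
          _ = Real.sqrt (‖x‖ ^ 2) := by rw [h2]
          _ = ‖x‖ := Real.sqrt_sq (norm_nonneg _)
      have hCcont : Continuous C := by
        have h1 : Isometry C := Isometry.of_dist_eq fun x y => by
          rw [dist_eq_norm, dist_eq_norm, ← hCsub, hCnorm]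
        exact h1.continuous
      have hcont1 : Continuous
          (fun x : H2 => C ((ContinuousLinearMap.adjoint W) (W (C x)))) :=
        hCcont.comp (((ContinuousLinearMap.adjoint W).continuous).comp
          (W.continuous.comp hCcont))
      have hcont2 : Continuous
          (fun x : H2 => W ((ContinuousLinearMap.adjoint W) x)) :=
        W.continuous.comp (ContinuousLinearMap.adjoint W).continuous
      set S : Set H2 := H2.kernel '' {w : ℂ | ‖w‖ < 1} with hS
      have horto : (Submodule.span ℂ S)ᗮ = ⊥ := by
        rw [Submodule.eq_bot_iff]
        intro x hx
        apply H2.ext_eval x 0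
        intro z hz
        rw [H2.eval_zero]
        rw [← H2.inner_kernel z hz]
        have hk : kernel z ∈ Submodule.span ℂ S :=
          Submodule.subset_span ⟨z, hz, rfl⟩
        exact (Submodule.mem_orthogonal (Submodule.span ℂ S) x).mp hx _ hk
      have hdense : Dense ((Submodule.span ℂ S : Submodule ℂ H2) : Set H2) := by
        rw [Submodule.dense_iff_topologicalClosure_eq_top,
          ← Submodule.orthogonal_orthogonal_eq_closure, horto,
          Submodule.bot_orthogonal_eq_top]
      have heqon : Set.EqOn (fun x : H2 => C ((ContinuousLinearMap.adjoint W) (W (C x))))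
          (fun x : H2 => W ((ContinuousLinearMap.adjoint W) x))
          ((Submodule.span ℂ S : Submodule ℂ H2) : Set H2) := by
        intro x hx
        induction hx using Submodule.span_induction with
        | mem x hxS =>
          obtain ⟨w, hw, rfl⟩ := hxS
          exact hker w hw
        | zero => simp [hC0]
        | add x y hx hy ihx ihy =>
          simp only at ihx ihy ⊢
          rw [hC.map_add, map_add, map_add, hC.map_add, ihx, ihy, map_add, map_add]
        | smul r x hx ih =>
          simp only at ih ⊢
          rw [hC.map_smul, map_smul, map_smul, hC.map_smul, Complex.conj_conj, ih,
            map_smul, map_smul]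
      have hfun := Continuous.ext_on hdense hcont1 hcont2 heqon
      intro x
      exact congrFun hfun x
  -- conjugation helpers
  have hu : ∀ x : ℂ, conj (μ * conj x) = conj μ * x := by
    intro x; rw [map_mul, Complex.conj_conj]
  have hβc : conj β ≠ 0 := fun h => hβ (by simpa using congrArg conj h)
  have hdc : conj d ≠ 0 := fun h => hd0 (by simpa using congrArg conj h)
  have hN : β * conj β * (d * conj d) ≠ 0 :=
    mul_ne_zero (mul_ne_zero hβ hβc) (mul_ne_zero hd0 hdc)
  have hLHS : ∀ w v : ℂ, ‖w‖ < 1 → ‖v‖ < 1 →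
      ⟪W (kernel (μ * conj w)), W (kernel (μ * conj v))⟫_ℂ
        = (β * conj β * (d * conj d)) *
          ((conj d - μ * conj w * conj b) * (d - conj μ * v * b)
            - (μ * conj w * conj a - conj c) * (conj μ * v * a - c))⁻¹ := by
    intro w v hw hv
    rw [hWinner _ _ (hnorm_mu w hw) (hnorm_mu v hv)]
    have e1 : conj (A (μ * conj w)) = conj β * conj d * (conj d - μ * conj w * conj b)⁻¹ := by
      simp only [hAdef, map_mul, map_inv₀, map_sub, Complex.conj_conj]
    have e2 : A (μ * conj v) = β * d * (d - conj μ * v * b)⁻¹ := by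
      simp only [hAdef, hu v]
    have e3 : q (μ * conj v) = (conj μ * v * a - c) * (d - conj μ * v * b)⁻¹ := by
      simp only [hqdef, hu v]
    have e4 : conj (q (μ * conj w))
        = (μ * conj w * conj a - conj c) * (conj d - μ * conj w * conj b)⁻¹ := by
      simp only [hqdef, map_mul, map_sub, map_inv₀, Complex.conj_conj]
    have nY : d - conj μ * v * b ≠ 0 := by
      have h := hdb (μ * conj v) (hnorm_mu v hv); rwa [hu v] at h
    have nX : conj d - μ * conj w * conj b ≠ 0 := by
      have h := hdb (μ * conj w) (hnorm_mu w hw)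
      rw [hu w] at h
      intro h0
      apply h
      have h1 := congrArg conj h0
      simp only [map_sub, map_mul, map_zero, Complex.conj_conj] at h1
      exact h1
    have nT : 1 - q (μ * conj v) * conj (q (μ * conj w)) ≠ 0 :=
      hns _ _ (hq1 _ (hnorm_mu v hv))
        (by rw [RCLike.norm_conj]; exact hq1 _ (hnorm_mu w hw))
    have hfac : (conj d - μ * conj w * conj b) * (d - conj μ * v * b)
        - (μ * conj w * conj a - conj c) * (conj μ * v * a - c)
        = (conj d - μ * conj w * conj b) * (d - conj μ * v * b)
            * (1 - q (μ * conj v) * conj (q (μ * conj w))) := by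
      rw [e3, e4]
      field_simp [nX, nY]
    rw [e1, e2, hfac]
    generalize (1 - q (μ * conj v) * conj (q (μ * conj w))) = T at nT ⊢
    field_simp [nX, nY, nT]
  have hRHS : ∀ w v : ℂ, ‖w‖ < 1 → ‖v‖ < 1 →
      ψ v * (conj (ψ w) * (1 - φ v * conj (φ w))⁻¹)
        = (β * conj β * (d * conj d)) *
          ((conj c * conj w + conj d) * (c * v + d)
            - (a * v + b) * (conj a * conj w + conj b))⁻¹ := by
    intro w v hw hv
    have m1 : c * v + d ≠ 0 := hden v hv
    have m2 : conj c * conj w + conj d ≠ 0 := by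
      intro h0
      apply hden w hw
      have h1 := congrArg conj h0
      simp only [map_add, map_mul, map_zero, Complex.conj_conj] at h1
      exact h1
    have m3 : 1 - φ v * conj (φ w) ≠ 0 :=
      hns _ _ (hself v hv) (by rw [RCLike.norm_conj]; exact hself w hw)
    have e5 : conj (ψ w) = conj β * conj d * (conj c * conj w + conj d)⁻¹ := by
      rw [hψ' w]
      simp only [map_mul, map_add, map_inv₀, Complex.conj_conj]
    have hfac2 : (conj c * conj w + conj d) * (c * v + d)
        - (a * v + b) * (conj a * conj w + conj b)
        = (conj c * conj w + conj d) * (c * v + d) * (1 - φ v * conj (φ w)) := by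
      rw [hφ v, hφ w]
      simp only [map_div₀, map_add, map_mul, Complex.conj_conj]
      field_simp [m1, m2]
    rw [hψ' v, e5, hfac2]
    generalize (1 - φ v * conj (φ w)) = T at m3 ⊢
    field_simp [m1, m2, m3]
  rw [key]
  constructor
  · intro hP
    have hQ : ∀ w v : ℂ, ‖w‖ < 1 → ‖v‖ < 1 →
        (conj d - μ * conj w * conj b) * (d - conj μ * v * b)
            - (μ * conj w * conj a - conj c) * (conj μ * v * a - c)
          = (conj c * conj w + conj d) * (c * v + d)
            - (a * v + b) * (conj a * conj w + conj b) := by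
      intro w v hw hv
      have h := hP w v hw hv
      rw [hLHS w v hw hv, hRHS w v hw hv] at h
      exact inv_inj.mp (mul_left_cancel₀ hN h)
    have h00 := hQ 0 0 (by norm_num) (by norm_num)
    simp only [map_zero, mul_zero, zero_mul, sub_zero, zero_sub, zero_add, add_zero,
      neg_mul, mul_neg, neg_neg] at h00
    have hbc : conj b * b = conj c * c := by linear_combination h00
    have hnb : ‖b‖ = ‖c‖ := by
      have h1 : (‖b‖ : ℂ) ^ 2 = (‖c‖ : ℂ) ^ 2 := by
        rw [← Complex.mul_conj', ← Complex.mul_conj']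
        linear_combination hbc
      have h2 : (‖b‖ : ℝ) ^ 2 = (‖c‖ : ℝ) ^ 2 := by exact_mod_cast h1
      calc ‖b‖ = Real.sqrt (‖b‖ ^ 2) := (Real.sqrt_sq (norm_nonneg _)).symm
        _ = Real.sqrt (‖c‖ ^ 2) := by rw [h2]
        _ = ‖c‖ := Real.sqrt_sq (norm_nonneg _)
    refine ⟨hnb, ?_⟩
    have hhalf : ‖(1/2 : ℂ)‖ < 1 := by norm_num
    have h10 := hQ (1/2) 0 hhalf (by norm_num)
    simp only [map_zero, mul_zero, zero_mul, sub_zero, zero_sub, zero_add, add_zero,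
      neg_mul, mul_neg, neg_neg, map_div₀, map_one, map_ofNat] at h10
    have hx : μ * (conj a * c - conj b * d) = conj c * d - conj a * b := by
      linear_combination 2 * h10 - 2 * hbc
    linear_combination (-(conj μ)) * hx + (conj a * c - conj b * d) * hμμ
  · rintro ⟨h1n, h2c⟩
    have hbc : conj b * b = conj c * c := by
      have hb2 : (‖b‖ : ℂ) ^ 2 = (‖c‖ : ℂ) ^ 2 := by rw [h1n]
      rw [← Complex.mul_conj', ← Complex.mul_conj'] at hb2
      linear_combination hb2
    have hx : μ * (conj a * c - conj b * d) = conj c * d - conj a * b := by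
      linear_combination -μ * h2c + (conj c * d - conj a * b) * hμμ
    have hconj : (c * conj d - a * conj b) * μ = a * conj c - b * conj d := by
      have h := congrArg conj h2c
      simpa only [map_mul, map_sub, Complex.conj_conj] using h
    have h3x : conj μ * (a * conj c - b * conj d) = c * conj d - a * conj b := by
      linear_combination -conj μ * hconj + (c * conj d - a * conj b) * hμμ
    intro w v hw hv
    rw [hLHS w v hw hv, hRHS w v hw hv]
    have hE : (conj d - μ * conj w * conj b) * (d - conj μ * v * b)
            - (μ * conj w * conj a - conj c) * (conj μ * v * a - c)
        = (conj c * conj w + conj d) * (c * v + d)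
            - (a * v + b) * (conj a * conj w + conj b) := by
      linear_combination (conj w * v + 1) * hbc
      + conj w * v * (conj b * b - conj a * a) * hμμ
        + conj w * hx + v * h3x
    rw [hE]
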